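/- Let u ∈ ℝ^N be a unit vector, P = u uᵀ, and suppose there is a constant C > 0 such that for every column i of a positive matrix X^{(l)} ∈ ℝ_{>0}^{N×d}, ‖X^{(l)}_{:,i} − P X^{(l)}_{:,i}‖₂ ≤ C ‖P X^{(l)}_{:,i}‖₂ (e^{d_H(X^{(l)}_{:,i}, u)} − 1). If max_i d_H(X^{(l)}_{:,i}, u) → 0 as l → ∞, then ‖(I−P)X^{(l)}‖_F / ‖P X^{(l)}‖_F → 0 and consequently NumRank(X^{(l)}) → 1. -/

import Mathlib

open scoped BigOperators

noncomputable def vecNorm {n : ℕ} (v : Fin n → ℝ) : ℝ := Real.sqrt (∑ i, v i ^ 2)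

noncomputable def frobNorm {N d : ℕ} (X : Matrix (Fin N) (Fin d) ℝ) : ℝ :=
  Real.sqrt (∑ i, ∑ j, X i j ^ 2)

noncomputable def specNorm {N d : ℕ} (X : Matrix (Fin N) (Fin d) ℝ) : ℝ :=
  sSup {c : ℝ | ∃ v : Fin d → ℝ, vecNorm v ≤ 1 ∧ c = vecNorm (X.mulVec v)}

noncomputable def numRank {N d : ℕ} (X : Matrix (Fin N) (Fin d) ℝ) : ℝ :=
  frobNorm X ^ 2 / specNorm X ^ 2

def frobInner {N d : ℕ} (A B : Matrix (Fin N) (Fin d) ℝ) : ℝ := ∑ i, ∑ j, A i j * B i j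

/-- Hilbert projective distance on the open positive cone. -/
noncomputable def dH {n : ℕ} (x y : Fin n → ℝ) : ℝ :=
  Real.log ((⨆ i, x i / y i) / (⨅ i, x i / y i))

/-- Apply a map `σ : ℝ^N → ℝ^N` to each column of a matrix. -/
def colApply {N d : ℕ} (σ : (Fin N → ℝ) → (Fin N → ℝ)) (M : Matrix (Fin N) (Fin d) ℝ) :
    Matrix (Fin N) (Fin d) ℝ := Matrix.of fun i j => σ (fun k => M k j) i

/-!
`P = u uᵀ` is an orthogonal projection, so `‖X‖_F² = ‖PX‖_F² + ‖(I - P)X‖_F²`, and testing the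
spectral norm against the unit vector along `Xᵀu` gives `‖PX‖_F ≤ ‖X‖₂ ≤ ‖X‖_F`. Hence
`1 ≤ NumRank X ≤ 1 + r²` with `r = ‖(I - P)X‖_F / ‖PX‖_F`. Summing the squared columnwise bounds
gives `r ≤ C (e^{max_i d_H} - 1)`, which tends to `0`.
-/

open Filter Topology Matrix

section Norms

variable {n m : ℕ}

lemma vecNorm_nonneg (v : Fin n → ℝ) : 0 ≤ vecNorm v := Real.sqrt_nonneg _

lemma vecNorm_sq (v : Fin n → ℝ) : vecNorm v ^ 2 = ∑ i, v i ^ 2 :=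
  Real.sq_sqrt (Finset.sum_nonneg fun _ _ => sq_nonneg _)

lemma vecNorm_pos_of_pos (hn : 0 < n) {v : Fin n → ℝ} (hv : ∀ i, 0 < v i) : 0 < vecNorm v :=
  Real.sqrt_pos.mpr (Finset.sum_pos (fun i _ => pow_pos (hv i) 2) ⟨⟨0, hn⟩, Finset.mem_univ _⟩)

lemma vecNorm_smul (a : ℝ) (v : Fin n → ℝ) : vecNorm (a • v) = |a| * vecNorm v := by
  rw [vecNorm, vecNorm, ← Real.sqrt_sq_eq_abs, ← Real.sqrt_mul (sq_nonneg a)]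
  simp only [Pi.smul_apply, smul_eq_mul, mul_pow, Finset.mul_sum]

lemma dotProduct_self_eq_vecNorm_sq (v : Fin n → ℝ) : v ⬝ᵥ v = vecNorm v ^ 2 := by
  rw [vecNorm_sq]
  simp only [dotProduct, sq]

lemma dotProduct_le_vecNorm_mul (u v : Fin n → ℝ) : u ⬝ᵥ v ≤ vecNorm u * vecNorm v :=
  Real.sum_mul_le_sqrt_mul_sqrt _ u v

lemma frobNorm_nonneg (X : Matrix (Fin n) (Fin m) ℝ) : 0 ≤ frobNorm X := Real.sqrt_nonneg _

lemma frobNorm_sq_eq_sum_vecNorm_sq (X : Matrix (Fin n) (Fin m) ℝ) :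
    frobNorm X ^ 2 = ∑ j, vecNorm (fun i => X i j) ^ 2 := by
  rw [frobNorm, Real.sq_sqrt (by positivity), Finset.sum_comm]
  simp only [vecNorm_sq]

lemma frobNorm_vecMulVec (a : Fin n → ℝ) (b : Fin m → ℝ) :
    frobNorm (vecMulVec a b) = vecNorm a * vecNorm b := by
  rw [frobNorm, vecNorm, vecNorm, ← Real.sqrt_mul (by positivity), Finset.sum_mul_sum]
  simp only [vecMulVec_apply, mul_pow]

lemma vecNorm_mulVec_le (X : Matrix (Fin n) (Fin m) ℝ) (v : Fin m → ℝ) :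
    vecNorm (X *ᵥ v) ≤ frobNorm X * vecNorm v := by
  rw [vecNorm, vecNorm, frobNorm, ← Real.sqrt_mul (by positivity), Finset.sum_mul]
  exact Real.sqrt_le_sqrt
    (Finset.sum_le_sum fun i _ => Finset.sum_mul_sq_le_sq_mul_sq Finset.univ (X i) v)

lemma vecNorm_mulVec_le_frobNorm (X : Matrix (Fin n) (Fin m) ℝ) {v : Fin m → ℝ}
    (hv : vecNorm v ≤ 1) : vecNorm (X *ᵥ v) ≤ frobNorm X :=
  (vecNorm_mulVec_le X v).trans (mul_le_of_le_one_right (frobNorm_nonneg X) hv)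

lemma specNorm_bddAbove (X : Matrix (Fin n) (Fin m) ℝ) :
    BddAbove {c : ℝ | ∃ v : Fin m → ℝ, vecNorm v ≤ 1 ∧ c = vecNorm (X *ᵥ v)} :=
  ⟨frobNorm X, fun _ ⟨_, hv, hc⟩ => hc ▸ vecNorm_mulVec_le_frobNorm X hv⟩

lemma vecNorm_mulVec_le_specNorm (X : Matrix (Fin n) (Fin m) ℝ) {v : Fin m → ℝ}
    (hv : vecNorm v ≤ 1) : vecNorm (X *ᵥ v) ≤ specNorm X :=
  le_csSup (specNorm_bddAbove X) ⟨v, hv, rfl⟩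

lemma specNorm_le_frobNorm (X : Matrix (Fin n) (Fin m) ℝ) : specNorm X ≤ frobNorm X :=
  csSup_le ⟨_, 0, by simp [vecNorm], rfl⟩ fun _ ⟨_, hv, hc⟩ =>
    hc ▸ vecNorm_mulVec_le_frobNorm X hv

lemma one_le_numRank {X : Matrix (Fin n) (Fin m) ℝ} (hX : 0 < specNorm X) : 1 ≤ numRank X := by
  rw [numRank, one_le_div (by positivity)]
  exact pow_le_pow_left₀ hX.le (specNorm_le_frobNorm X) 2

lemma frobNorm_le_abs_mul_of_col_le {A B : Matrix (Fin n) (Fin m) ℝ} (K : ℝ)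
    (h : ∀ j, vecNorm (fun i => A i j) ≤ K * vecNorm (fun i => B i j)) :
    frobNorm A ≤ |K| * frobNorm B := by
  have hsq : frobNorm A ^ 2 ≤ (|K| * frobNorm B) ^ 2 := by
    rw [mul_pow, frobNorm_sq_eq_sum_vecNorm_sq, frobNorm_sq_eq_sum_vecNorm_sq, Finset.mul_sum]
    gcongr with j
    rw [← mul_pow]
    refine pow_le_pow_left₀ (vecNorm_nonneg _) ((h j).trans ?_) 2
    exact mul_le_mul_of_nonneg_right (le_abs_self K) (vecNorm_nonneg _)
  exact (pow_le_pow_iff_left₀ (frobNorm_nonneg A) (by positivity [frobNorm_nonneg B])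
    two_ne_zero).mp hsq

end Norms

section RankOneProjection

variable {N d : ℕ} {u : Fin N → ℝ}

lemma col_mul (A : Matrix (Fin N) (Fin N) ℝ) (X : Matrix (Fin N) (Fin d) ℝ) (j : Fin d) :
    (fun i => (A * X) i j) = A *ᵥ fun k => X k j :=
  rfl

lemma col_one_sub_mul (A : Matrix (Fin N) (Fin N) ℝ) (X : Matrix (Fin N) (Fin d) ℝ)
    (j : Fin d) :
    (fun i => ((1 - A) * X : Matrix (Fin N) (Fin d) ℝ) i j) =
      (fun k => X k j) - A *ᵥ fun k => X k j := by
  rw [col_mul, sub_mulVec, one_mulVec]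

lemma vecMulVec_self_mulVec (u x : Fin N → ℝ) : vecMulVec u u *ᵥ x = (u ⬝ᵥ x) • u := by
  rw [vecMulVec_mulVec, op_smul_eq_smul]

lemma vecNorm_sq_eq_proj_add_perp (hu : vecNorm u = 1) (x : Fin N → ℝ) :
    vecNorm x ^ 2 = vecNorm (vecMulVec u u *ᵥ x) ^ 2 + vecNorm (x - vecMulVec u u *ᵥ x) ^ 2 := by
  have hu2 : ∑ i, u i ^ 2 = 1 := by rw [← vecNorm_sq, hu, one_pow]
  rw [vecMulVec_self_mulVec]
  set a := u ⬝ᵥ x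
  have hproj : ∑ i, (a * u i) ^ 2 = a ^ 2 := by
    simp only [mul_pow, ← Finset.mul_sum, hu2, mul_one]
  have hperp : ∑ i, (x i - a * u i) ^ 2 = ∑ i, x i ^ 2 - 2 * a * a + a ^ 2 * ∑ i, u i ^ 2 := by
    rw [← Finset.sum_congr rfl fun i _ => (by ring :
      x i ^ 2 - 2 * a * (u i * x i) + a ^ 2 * u i ^ 2 = (x i - a * u i) ^ 2),
      Finset.sum_add_distrib, Finset.sum_sub_distrib, ← Finset.mul_sum, ← Finset.mul_sum]
    rfl
  simp only [vecNorm_sq, Pi.sub_apply, Pi.smul_apply, smul_eq_mul, hproj, hperp, hu2]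
  ring

lemma frobNorm_sq_eq_proj_add_perp (hu : vecNorm u = 1) (X : Matrix (Fin N) (Fin d) ℝ) :
    frobNorm X ^ 2 =
      frobNorm (vecMulVec u u * X) ^ 2 + frobNorm ((1 - vecMulVec u u) * X) ^ 2 := by
  simp only [frobNorm_sq_eq_sum_vecNorm_sq, col_one_sub_mul, ← Finset.sum_add_distrib]
  exact Finset.sum_congr rfl fun j _ => vecNorm_sq_eq_proj_add_perp hu _

lemma frobNorm_vecMulVec_self_mul (hu : vecNorm u = 1) (X : Matrix (Fin N) (Fin d) ℝ) :
    frobNorm (vecMulVec u u * X) = vecNorm (u ᵥ* X) := by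
  rw [vecMulVec_mul, frobNorm_vecMulVec, hu, one_mul]

/-- The test vector is `w = c / ‖c‖` with `c = u ᵥ* X`, for which `u ⬝ᵥ (X *ᵥ w) = ‖c‖`;
for `c = 0` it is `0`, since `0⁻¹ = 0`. -/
lemma frobNorm_vecMulVec_self_mul_le_specNorm (hu : vecNorm u = 1)
    (X : Matrix (Fin N) (Fin d) ℝ) : frobNorm (vecMulVec u u * X) ≤ specNorm X := by
  rw [frobNorm_vecMulVec_self_mul hu]
  set c := u ᵥ* X
  set w := (vecNorm c)⁻¹ • c
  have hw : vecNorm w ≤ 1 := by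
    rw [vecNorm_smul, abs_inv, abs_of_nonneg (vecNorm_nonneg c)]
    exact inv_mul_le_one_of_le₀ le_rfl (vecNorm_nonneg c)
  have hdot : u ⬝ᵥ (X *ᵥ w) = vecNorm c := by
    rw [dotProduct_mulVec]
    change c ⬝ᵥ ((vecNorm c)⁻¹ • c) = vecNorm c
    rw [dotProduct_smul, dotProduct_self_eq_vecNorm_sq, smul_eq_mul]
    rcases eq_or_ne (vecNorm c) 0 with h | h
    · simp [h]
    · field_simp
  calc vecNorm c = u ⬝ᵥ (X *ᵥ w) := hdot.symm
    _ ≤ vecNorm (X *ᵥ w) := by simpa [hu] using dotProduct_le_vecNorm_mul u (X *ᵥ w)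
    _ ≤ specNorm X := vecNorm_mulVec_le_specNorm X hw

lemma numRank_le_one_add_sq (hu : vecNorm u = 1) {X : Matrix (Fin N) (Fin d) ℝ}
    (hPX : 0 < frobNorm (vecMulVec u u * X)) :
    numRank X ≤ 1 + (frobNorm ((1 - vecMulVec u u) * X) / frobNorm (vecMulVec u u * X)) ^ 2 :=
  calc numRank X ≤ frobNorm X ^ 2 / frobNorm (vecMulVec u u * X) ^ 2 := by
        unfold numRank
        gcongr
        exact frobNorm_vecMulVec_self_mul_le_specNorm hu X
    _ = _ := by
        rw [frobNorm_sq_eq_proj_add_perp hu X]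
        field_simp

lemma tendsto_numRank_one {ι : Type*} {L : Filter ι} (hu : vecNorm u = 1)
    {X : ι → Matrix (Fin N) (Fin d) ℝ} (hPX : ∀ l, 0 < frobNorm (vecMulVec u u * X l))
    (h : Tendsto (fun l => frobNorm ((1 - vecMulVec u u) * X l) / frobNorm (vecMulVec u u * X l))
      L (𝓝 0)) :
    Tendsto (fun l => numRank (X l)) L (𝓝 1) := by
  have hupper : Tendsto (fun l => 1 + (frobNorm ((1 - vecMulVec u u) * X l) /
      frobNorm (vecMulVec u u * X l)) ^ 2) L (𝓝 1) := by
    simpa using (h.pow 2).const_add 1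
  refine tendsto_of_tendsto_of_tendsto_of_le_of_le tendsto_const_nhds hupper (fun l => ?_)
    fun l => numRank_le_one_add_sq hu (hPX l)
  exact one_le_numRank ((hPX l).trans_le (frobNorm_vecMulVec_self_mul_le_specNorm hu (X l)))

end RankOneProjection

/-- If the columnwise bound `‖(I-P)X_{:,i}‖ ≤ C ‖P X_{:,i}‖ (e^{d_H(X_{:,i},u)} - 1)` holds and
`max_i d_H(X^{(l)}_{:,i}, u) → 0`, then `‖(I-P)X^{(l)}‖_F / ‖P X^{(l)}‖_F → 0` and
`NumRank(X^{(l)}) → 1`. -/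
theorem stmt19 {N d : ℕ} (hN : 0 < N) (hd : 0 < d)
    (u : Fin N → ℝ) (hu : ∀ i, 0 < u i) (hunorm : vecNorm u = 1)
    (X : ℕ → Matrix (Fin N) (Fin d) ℝ) (hX : ∀ l i j, 0 < X l i j)
    (C : ℝ) (hC : 0 < C)
    (hbound : ∀ l (j : Fin d),
      vecNorm ((fun k => X l k j) - (Matrix.vecMulVec u u).mulVec fun k => X l k j) ≤
        C * vecNorm ((Matrix.vecMulVec u u).mulVec fun k => X l k j) *
          (Real.exp (dH (fun k => X l k j) u) - 1))
    (hdh : Filter.Tendsto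
      (fun l => Finset.univ.sup' (Finset.univ_nonempty_iff.mpr (Fin.pos_iff_nonempty.mp hd))
        fun j : Fin d => dH (fun k => X l k j) u) Filter.atTop (nhds 0)) :
    Filter.Tendsto
      (fun l => frobNorm ((1 - Matrix.vecMulVec u u) * X l) /
        frobNorm (Matrix.vecMulVec u u * X l)) Filter.atTop (nhds 0) ∧
    Filter.Tendsto (fun l => numRank (X l)) Filter.atTop (nhds 1) := by
  set P := vecMulVec u u
  set M := fun l => Finset.univ.sup' (Finset.univ_nonempty_iff.mpr (Fin.pos_iff_nonempty.mp hd))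
    fun j : Fin d => dH (fun k => X l k j) u
  have hPX : ∀ l, 0 < frobNorm (P * X l) := fun l => by
    rw [frobNorm_vecMulVec_self_mul hunorm]
    exact vecNorm_pos_of_pos hd fun j =>
      Finset.sum_pos (fun k _ => mul_pos (hu k) (hX l k j)) ⟨⟨0, hN⟩, Finset.mem_univ _⟩
  have hcol : ∀ l j, vecNorm (fun i => ((1 - P) * X l : Matrix (Fin N) (Fin d) ℝ) i j) ≤
      C * (Real.exp (M l) - 1) * vecNorm (fun i => (P * X l) i j) := fun l j => by
    rw [col_one_sub_mul, col_mul, mul_right_comm]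
    refine (hbound l j).trans ?_
    gcongr
    · exact mul_nonneg hC.le (vecNorm_nonneg _)
    · exact Finset.le_sup' (fun j : Fin d => dH (fun k => X l k j) u) (Finset.mem_univ j)
  have hK : Tendsto (fun l => C * (Real.exp (M l) - 1)) atTop (𝓝 0) := by
    simpa using (((Real.continuous_exp.tendsto 0).comp hdh).sub_const 1).const_mul C
  have hratio : Tendsto (fun l => frobNorm ((1 - P) * X l) / frobNorm (P * X l)) atTop (𝓝 0) :=
    squeeze_zero (fun l => div_nonneg (frobNorm_nonneg _) (hPX l).le)
      (fun l => (div_le_iff₀ (hPX l)).mpr (frobNorm_le_abs_mul_of_col_le _ (hcol l)))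
      (by simpa only [abs_zero] using hK.abs)
  exact ⟨hratio, tendsto_numRank_one hunorm hPX hratio⟩
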